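/- There exists a P̂₄-free graph on 16 vertices that contains K₄ as a subgraph and has exactly 32 = ⌊16²/8⌋ triangles. -/

import Mathlib

/-- `H` is contained in `G` as a (not necessarily induced) subgraph:
there is an injective map of vertices carrying edges of `H` to edges of `G`. -/
def Contains {α β : Type*} (H : SimpleGraph α) (G : SimpleGraph β) : Prop :=
  ∃ f : α → β, Function.Injective f ∧ ∀ ⦃a b⦄, H.Adj a b → G.Adj (f a) (f b)

/-- The suspension `P̂₄` of the path on 4 vertices: a new apex vertex `none`
is joined to all four vertices of `P₄`. -/
def hatP4 : SimpleGraph (Option (Fin 4)) :=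
  SimpleGraph.fromRel (fun a b =>
    (∃ i j, a = some i ∧ b = some j ∧ (SimpleGraph.pathGraph 4).Adj i j) ∨ a = none)

/-- The number of triangles (3-cliques) of a graph. -/
noncomputable def triangleCount {V : Type*} (G : SimpleGraph V) : ℕ :=
  (G.cliqueSet 3).ncard

/-! The witness is the rook's graph `K₄ □ K₄` on a `4 × 4` board. A clique of a rook's graph lies
in a single row or column, so its triangles are the `8 · 4 = 32` triples inside one of the eight
lines, and each line is a `K₄`. In a copy of `P̂₄` the apex and the first path vertex span a line,
and every further path vertex, forming a triangle with the apex and its predecessor, stays on it: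
the five vertices would have to fit in a line of four squares. -/

open SimpleGraph Finset Fintype

theorem contains_iff_isContained {α β : Type*} {H : SimpleGraph α} {G : SimpleGraph β} :
    Contains H G ↔ H ⊑ G :=
  ⟨fun ⟨f, hf, hadj⟩ => ⟨⟨⟨f, fun h => hadj h⟩, hf⟩⟩,
    fun ⟨f⟩ => ⟨f, f.injective, fun _ _ => f.toHom.map_adj⟩⟩

theorem triangleCount_eq_card_cliqueFinset {V : Type*} [Fintype V] [DecidableEq V]
    (G : SimpleGraph V) [DecidableRel G.Adj] : triangleCount G = #(G.cliqueFinset 3) := by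
  rw [triangleCount, ← coe_cliqueFinset, Set.ncard_coe_finset]

theorem triangleCount_map_equiv {V W : Type*} (G : SimpleGraph V) (e : V ≃ W) :
    triangleCount (G.map e) = triangleCount G := by
  rw [triangleCount, cliqueSet_map_of_equiv,
    Set.ncard_image_of_injective _ (Finset.map_injective _)]
  rfl

theorem hatP4_adj_none (i : Fin 4) : hatP4.Adj none (some i) := by
  simp [hatP4]

theorem hatP4_adj_some {i j : Fin 4} (h : (pathGraph 4).Adj i j) : hatP4.Adj (some i) (some j) := by
  simpa [hatP4] using ⟨h.ne, Or.inl h⟩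

section Rook

variable {α β : Type*}

def rookGraph (α β : Type*) : SimpleGraph (α × β) := (⊤ : SimpleGraph α) □ (⊤ : SimpleGraph β)

theorem rookGraph_adj {x y : α × β} :
    (rookGraph α β).Adj x y ↔ x ≠ y ∧ (x.1 = y.1 ∨ x.2 = y.2) := by
  simp only [rookGraph, boxProd_adj, top_adj, ne_eq, Prod.ext_iff]
  tauto

instance [DecidableEq α] [DecidableEq β] : DecidableRel (rookGraph α β).Adj :=
  fun _ _ => decidable_of_iff _ rookGraph_adj.symm

theorem fst_eq_of_rookGraph_adj {x y z : α × β} (hxy : (rookGraph α β).Adj x y) (h : x.1 = y.1)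
    (hxz : (rookGraph α β).Adj x z) (hyz : (rookGraph α β).Adj y z) : z.1 = x.1 := by
  rw [rookGraph_adj] at hxy hxz hyz
  have hne : x.2 ≠ y.2 := fun h2 => hxy.1 (Prod.ext h h2)
  rcases hxz.2 with hxz1 | hxz2
  · exact hxz1.symm
  rcases hyz.2 with hyz1 | hyz2
  · rw [← hyz1, h]
  · exact absurd (hxz2.trans hyz2.symm) hne

theorem isClique_rookGraph_iff {s : Set (α × β)} :
    (rookGraph α β).IsClique s ↔
      (∀ x ∈ s, ∀ y ∈ s, x.1 = y.1) ∨ ∀ x ∈ s, ∀ y ∈ s, x.2 = y.2 := by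
  constructor
  · intro hs
    by_cases hrow : ∃ x ∈ s, ∃ y ∈ s, x ≠ y ∧ x.1 = y.1
    · obtain ⟨x, hx, y, hy, hxy, h⟩ := hrow
      have hfst : ∀ z ∈ s, z.1 = x.1 := fun z hz => by
        obtain rfl | hzx := eq_or_ne z x
        · rfl
        obtain rfl | hzy := eq_or_ne z y
        · exact h.symm
        exact fst_eq_of_rookGraph_adj (hs hx hy hxy) h (hs hx hz hzx.symm) (hs hy hz hzy.symm)
      exact Or.inl fun z hz w hw => (hfst z hz).trans (hfst w hw).symm
    · push Not at hrow
      refine Or.inr fun z hz w hw => ?_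
      obtain rfl | hzw := eq_or_ne z w
      · rfl
      exact (rookGraph_adj.1 (hs hz hw hzw)).2.resolve_left (hrow z hz w hw hzw)
  · rintro (h | h) x hx y hy hxy
    · exact rookGraph_adj.2 ⟨hxy, Or.inl (h x hx y hy)⟩
    · exact rookGraph_adj.2 ⟨hxy, Or.inr (h x hx y hy)⟩

theorem top_isContained_rookGraph (a : α) : (⊤ : SimpleGraph β) ⊑ rookGraph α β :=
  ⟨⟨⟨Prod.mk a, fun h => rookGraph_adj.2 ⟨by simpa using h.ne, Or.inl rfl⟩⟩,
    Prod.mk_right_injective a⟩⟩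

end Rook

section RookCount

variable {α β : Type*} [Fintype α] [Fintype β] [DecidableEq α] [DecidableEq β]

theorem cliqueFinset_rookGraph {n : ℕ} (hn : 2 ≤ n) :
    (rookGraph α β).cliqueFinset n =
      (univ.biUnion fun a => powersetCard n ({a} ×ˢ univ)) ∪
        univ.biUnion fun b => powersetCard n (univ ×ˢ {b}) := by
  ext s
  simp only [mem_cliqueFinset_iff, isNClique_iff, isClique_rookGraph_iff, mem_coe, mem_union,
    mem_biUnion, mem_univ, true_and, mem_powersetCard, subset_iff, mem_product, mem_singleton,
    and_true]
  constructor
  · rintro ⟨hrow | hcol, hcard⟩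
    all_goals obtain ⟨x, hx⟩ : s.Nonempty := card_pos.1 (by omega)
    · exact Or.inl ⟨x.1, fun y hy => hrow y hy x hx, hcard⟩
    · exact Or.inr ⟨x.2, fun y hy => hcol y hy x hx, hcard⟩
  · rintro (⟨a, hrow, hcard⟩ | ⟨b, hcol, hcard⟩)
    · exact ⟨Or.inl fun x hx y hy => (hrow hx).trans (hrow hy).symm, hcard⟩
    · exact ⟨Or.inr fun x hx y hy => (hcol hx).trans (hcol hy).symm, hcard⟩

theorem card_cliqueFinset_rookGraph {n : ℕ} (hn : 2 ≤ n) :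
    #((rookGraph α β).cliqueFinset n) =
      card α * (card β).choose n + card β * (card α).choose n := by
  rw [cliqueFinset_rookGraph hn, card_union_of_disjoint, card_biUnion, card_biUnion]
  · simp [card_powersetCard]
  · intro b _ b' _ hbb'
    refine disjoint_left.2 fun s hs hs' => ?_
    simp only [mem_powersetCard, subset_iff, mem_product, mem_singleton, mem_univ,
      true_and] at hs hs'
    obtain ⟨x, hx⟩ : s.Nonempty := card_pos.1 (by omega)
    exact hbb' ((hs.1 hx).symm.trans (hs'.1 hx))
  · intro a _ a' _ haa'
    refine disjoint_left.2 fun s hs hs' => ?_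
    simp only [mem_powersetCard, subset_iff, mem_product, mem_singleton, mem_univ,
      and_true] at hs hs'
    obtain ⟨x, hx⟩ : s.Nonempty := card_pos.1 (by omega)
    exact haa' ((hs.1 hx).symm.trans (hs'.1 hx))
  · refine disjoint_left.2 fun s hrow hcol => ?_
    simp only [mem_biUnion, mem_univ, true_and, mem_powersetCard, subset_iff, mem_product,
      mem_singleton, and_true] at hrow hcol
    obtain ⟨a, hrow, hcard⟩ := hrow
    obtain ⟨b, hcol, -⟩ := hcol
    obtain ⟨x, hx, y, hy, hxy⟩ := one_lt_card.1 (by omega : 1 < #s)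
    exact hxy (Prod.ext ((hrow hx).trans (hrow hy).symm) ((hcol hx).trans (hcol hy).symm))

end RookCount

section HatP4

variable {α β : Type*}

theorem card_le_of_copy_hatP4_rookGraph [Fintype β] (f : Copy hatP4 (rookGraph α β))
    (hrow : (f none).1 = (f (some 0)).1) : 5 ≤ card β := by
  have apex (i : Fin 4) := f.toHom.map_adj (hatP4_adj_none i)
  have path {i j : Fin 4} (h : i.val + 1 = j.val) :=
    f.toHom.map_adj (hatP4_adj_some (pathGraph_adj.2 (Or.inl h)))
  have h1 := fst_eq_of_rookGraph_adj (apex 0) hrow (apex 1) (path (i := 0) (j := 1) rfl)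
  have h2 := fst_eq_of_rookGraph_adj (apex 1) h1.symm (apex 2) (path (i := 1) (j := 2) rfl)
  have h3 := fst_eq_of_rookGraph_adj (apex 2) h2.symm (apex 3) (path (i := 2) (j := 3) rfl)
  have hfst : ∀ v, (f v).1 = (f none).1 := by
    rintro (_ | i)
    · rfl
    · fin_cases i
      exacts [hrow.symm, h1, h2, h3]
  have hinj : Function.Injective fun v => (f v).2 := fun v w h =>
    f.injective (Prod.ext ((hfst v).trans (hfst w).symm) h)
  simpa using card_le_of_injective _ hinj

theorem hatP4_free_rookGraph [Fintype α] [Fintype β] (hα : card α ≤ 4) (hβ : card β ≤ 4) :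
    hatP4.Free (rookGraph α β) := by
  rintro ⟨f⟩
  rcases (rookGraph_adj.1 (f.toHom.map_adj (hatP4_adj_none 0))).2 with hrow | hcol
  · have := card_le_of_copy_hatP4_rookGraph f hrow
    omega
  · -- a column of `α × β` is a row of `β × α`
    let swap : rookGraph α β ≃g rookGraph β α := boxProdComm ⊤ ⊤
    have := card_le_of_copy_hatP4_rookGraph (swap.toCopy.comp f) hcol
    omega

end HatP4

/-- There is a `P̂₄`-free graph on `16` vertices containing `K₄` as a subgraph
with exactly `32 = ⌊16² / 8⌋` triangles. -/
theorem stmt_18 :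
    ∃ G : SimpleGraph (Fin 16), ¬ Contains hatP4 G ∧
      Contains (⊤ : SimpleGraph (Fin 4)) G ∧ triangleCount G = 32 := by
  let e : Fin 4 × Fin 4 ≃ Fin 16 := finProdFinEquiv
  refine ⟨(rookGraph (Fin 4) (Fin 4)).map e, ?_, ?_, ?_⟩
  · rw [contains_iff_isContained, ← isContained_congr_right (Iso.map e _)]
    exact hatP4_free_rookGraph (by simp) (by simp)
  · rw [contains_iff_isContained, ← isContained_congr_right (Iso.map e _)]
    exact top_isContained_rookGraph 0
  · rw [triangleCount_map_equiv, triangleCount_eq_card_cliqueFinset,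
      card_cliqueFinset_rookGraph (by norm_num)]
    simp
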